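/- arXiv:2502.13703 — 8 statements merged into one kernel-verified Lean document; each statement's English description precedes it below -/
import Mathlib

section
/- In an enemy-oriented hedonic game without neutrals, if a partition Π of the agent set A is core stable, then every coalition of Π is a clique in the friendship graph G^f; the same conclusion holds if Π is strictly core stable. -/
open scoped Classical

variable {A : Type*}

/-- Number of friends of agent `i` in coalition `S` (friendship graph `G`). -/
noncomputable def friendsIn (G : SimpleGraph A) (i : A) (S : Finset A) : ℕ :=
  (S.filter fun j => G.Adj i j).card

/-- Number of enemies of agent `i` in coalition `S`; without neutrals, an enemy
is any distinct non-adjacent agent. -/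
noncomputable def enemiesIn (G : SimpleGraph A) (i : A) (S : Finset A) : ℕ :=
  (S.filter fun j => j ≠ i ∧ ¬ G.Adj i j).card

/-- Agent `i` prefers coalition `S1` over `S2`. -/
def Prefers (G : SimpleGraph A) (i : A) (S1 S2 : Finset A) : Prop :=
  enemiesIn G i S1 < enemiesIn G i S2 ∨
    (enemiesIn G i S1 = enemiesIn G i S2 ∧ friendsIn G i S2 < friendsIn G i S1)

/-- Agent `i` weakly prefers coalition `S1` over `S2`. -/
def WeaklyPrefers (G : SimpleGraph A) (i : A) (S1 S2 : Finset A) : Prop :=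
  ¬ Prefers G i S2 S1

variable [Fintype A] [DecidableEq A]

/-- Coalition `B` blocks partition `P`. -/
def Blocks (G : SimpleGraph A) (P : Finpartition (Finset.univ : Finset A))
    (B : Finset A) : Prop :=
  B.Nonempty ∧ ∀ i ∈ B, ∀ C ∈ P.parts, i ∈ C → Prefers G i B C

/-- Coalition `B` weakly blocks partition `P`. -/
def WeaklyBlocks (G : SimpleGraph A) (P : Finpartition (Finset.univ : Finset A))
    (B : Finset A) : Prop :=
  B.Nonempty ∧ (∀ i ∈ B, ∀ C ∈ P.parts, i ∈ C → WeaklyPrefers G i B C) ∧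
    ∃ i ∈ B, ∀ C ∈ P.parts, i ∈ C → Prefers G i B C

/-- Partition `P` is core stable: no coalition blocks it. -/
def CoreStable (G : SimpleGraph A) (P : Finpartition (Finset.univ : Finset A)) : Prop :=
  ∀ B : Finset A, ¬ Blocks G P B

/-- Partition `P` is strictly core stable: no coalition weakly blocks it. -/
def StrictlyCoreStable (G : SimpleGraph A)
    (P : Finpartition (Finset.univ : Finset A)) : Prop :=
  ∀ B : Finset A, ¬ WeaklyBlocks G P B

lemma singleton_blocks {G : SimpleGraph A} {P : Finpartition (Finset.univ : Finset A)}
    {C : Finset A} (hC : C ∈ P.parts) {x y : A} (hx : x ∈ C) (hy : y ∈ C)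
    (hxy : x ≠ y) (hadj : ¬ G.Adj x y) :
    Blocks G P {x} ∧ WeaklyBlocks G P {x} := by
  have he0 : enemiesIn G x {x} = 0 := by
    simp [enemiesIn, Finset.filter_singleton]
  have hepos : 0 < enemiesIn G x C := by
    apply Finset.card_pos.2
    exact ⟨y, by simp [Finset.mem_filter, hy, hxy.symm, hadj]⟩
  have hpref : ∀ C' ∈ P.parts, x ∈ C' → Prefers G x {x} C' := by
    intro C' hC' hxC'
    have : C' = C := P.eq_of_mem_parts hC' hC hxC' hx
    subst this
    exact Or.inl (by omega)
  refine ⟨⟨⟨x, Finset.mem_singleton_self x⟩, ?_⟩,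
    ⟨x, Finset.mem_singleton_self x⟩, ?_, ⟨x, Finset.mem_singleton_self x, hpref⟩⟩
  · intro i hi C' hC' hiC'
    rw [Finset.mem_singleton] at hi; subst hi
    exact hpref C' hC' hiC'
  · intro i hi C' hC' hiC'
    rw [Finset.mem_singleton] at hi; subst hi
    intro hcon
    rcases hpref C' hC' hiC' with h | h <;> rcases hcon with h' | h' <;> omega

/-- In an enemy-oriented hedonic game without neutrals, if a partition `P`
is core stable then every coalition of `P` is a clique in the friendship graph; the same
holds if `P` is strictly core stable. -/
theorem stmt_0 [Nonempty A] (G : SimpleGraph A)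
    (P : Finpartition (Finset.univ : Finset A)) :
    (CoreStable G P → ∀ C ∈ P.parts, G.IsClique (C : Set A)) ∧
    (StrictlyCoreStable G P → ∀ C ∈ P.parts, G.IsClique (C : Set A)) := by
  constructor <;> intro hst C hC x hx y hy hxy <;> by_contra hadj
  · exact hst _ (singleton_blocks hC hx hy hxy hadj).1
  · exact hst _ (singleton_blocks hC hx hy hxy hadj).2
end

section
/- Let C_1, ..., C_m be pairwise disjoint nonempty subsets of the agent set A whose union is A such that for every i ∈ {1,...,m}, the set C_i is a clique of maximum size in the subgraph of the friendship graph G^f induced by A \ (C_1 ∪ ... ∪ C_{i-1}). Then the partition {C_1, ..., C_m} is core stable. In particular, every enemy-oriented hedonic game without neutrals admits a core stable partition. -/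
open scoped Classical

variable {A : Type*}

variable [Fintype A] [DecidableEq A]

/-- If `C 1, ..., C m` are pairwise disjoint nonempty coalitions covering the
agent set such that each `C i` is a maximum-size clique of the subgraph of the friendship
graph induced by the agents not in earlier coalitions, then the partition with these parts
is core stable; in particular a core stable partition always exists. -/
theorem stmt_1 [Nonempty A] (G : SimpleGraph A) (m : ℕ) (C : Fin m → Finset A)
    (hne : ∀ i, (C i).Nonempty)
    (hdisj : ∀ i j, i ≠ j → Disjoint (C i) (C j))
    (hcover : Finset.univ.biUnion C = Finset.univ)
    (hclique : ∀ i, G.IsClique ((C i : Finset A) : Set A))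
    (hmax : ∀ i : Fin m, ∀ D : Finset A,
      D ⊆ Finset.univ \ ((Finset.univ.filter fun j => j < i).biUnion C) →
      G.IsClique (D : Set A) → D.card ≤ (C i).card) :
    (∀ P : Finpartition (Finset.univ : Finset A),
        P.parts = Finset.image C Finset.univ → CoreStable G P) ∧
    ∃ P : Finpartition (Finset.univ : Finset A), CoreStable G P := by
  have hfr : ∀ (S : Finset A), G.IsClique (S : Set A) → ∀ i ∈ S,
      friendsIn G i S = S.card - 1 := by
    intro S hS i hi
    rw [friendsIn]
    have h : S.filter (fun j => G.Adj i j) = S.erase i := by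
      ext j
      simp only [Finset.mem_filter, Finset.mem_erase]
      constructor
      · rintro ⟨hj, hadj⟩; exact ⟨(G.ne_of_adj hadj).symm, hj⟩
      · rintro ⟨hji, hj⟩
        exact ⟨hj, hS (Finset.mem_coe.mpr hi) (Finset.mem_coe.mpr hj) (Ne.symm hji)⟩
    rw [h, Finset.card_erase_of_mem hi]
  have hen0 : ∀ (S : Finset A), G.IsClique (S : Set A) → ∀ i ∈ S,
      enemiesIn G i S = 0 := by
    intro S hS i hi
    simp only [enemiesIn, Finset.card_eq_zero, Finset.filter_eq_empty_iff]
    rintro j hj ⟨hji, hnadj⟩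
    exact hnadj (hS (Finset.mem_coe.mpr hi) (Finset.mem_coe.mpr hj) (Ne.symm hji))
  have key : ∀ P : Finpartition (Finset.univ : Finset A),
      P.parts = Finset.image C Finset.univ → CoreStable G P := by
    intro P hP B hB
    obtain ⟨hBne, hpref⟩ := hB
    have hidx : ∀ i ∈ B, ∃ k, i ∈ C k := by
      intro i _
      have : i ∈ Finset.univ.biUnion C := hcover ▸ Finset.mem_univ i
      simpa using this
    -- key consequences of blocking
    have hmain : ∀ i ∈ B, ∀ k, i ∈ C k →
        enemiesIn G i B = 0 ∧ (C k).card < B.card := by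
      intro i hi k hik
      have hmem : C k ∈ P.parts := by
        rw [hP]; exact Finset.mem_image_of_mem C (Finset.mem_univ k)
      have hp := hpref i hi (C k) hmem hik
      have he0 := hen0 (C k) (hclique k) i hik
      rcases hp with h | ⟨heq, hlt⟩
      · omega
      · have hB0 : enemiesIn G i B = 0 := by omega
        refine ⟨hB0, ?_⟩
        -- B is "clique around i": friendsIn i B = B.card - 1
        have hBadj : ∀ j ∈ B, j ≠ i → G.Adj i j := by
          have hB0' := hB0
          simp only [enemiesIn, Finset.card_eq_zero, Finset.filter_eq_empty_iff] at hB0'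
          intro j hj hji
          by_contra hnadj
          exact hB0' hj ⟨hji, hnadj⟩
        have hfB : friendsIn G i B = B.card - 1 := by
          rw [friendsIn]
          have h : B.filter (fun j => G.Adj i j) = B.erase i := by
            ext j
            simp only [Finset.mem_filter, Finset.mem_erase]
            constructor
            · rintro ⟨hj, hadj⟩; exact ⟨(G.ne_of_adj hadj).symm, hj⟩
            · rintro ⟨hji, hj⟩; exact ⟨hj, hBadj j hj hji⟩
          rw [h, Finset.card_erase_of_mem hi]
        have hfC := hfr (C k) (hclique k) i hik
        have hCpos : 1 ≤ (C k).card := Finset.card_pos.mpr (hne k)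
        have hBpos : 1 ≤ B.card := Finset.card_pos.mpr hBne
        omega
    -- B is a clique
    have hBclique : G.IsClique (B : Set A) := by
      intro x hx y hy hxy
      obtain ⟨k, hk⟩ := hidx x hx
      have h0 := (hmain x hx k hk).1
      simp only [enemiesIn, Finset.card_eq_zero, Finset.filter_eq_empty_iff] at h0
      by_contra hnadj
      exact h0 (Finset.mem_coe.mp hy) ⟨Ne.symm hxy, hnadj⟩
    -- minimal index among parts meeting B
    obtain ⟨i0, hi0⟩ := hBne
    have hKne : (Finset.univ.filter fun k => ∃ i ∈ B, i ∈ C k).Nonempty := by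
      obtain ⟨k, hk⟩ := hidx i0 hi0
      exact ⟨k, by simp only [Finset.mem_filter]; exact ⟨Finset.mem_univ k, i0, hi0, hk⟩⟩
    set K := Finset.univ.filter fun k => ∃ i ∈ B, i ∈ C k with hK
    obtain ⟨k0, hk0K, hk0min⟩ := K.exists_min_image id hKne
    obtain ⟨j0, hj0B, hj0C⟩ := (Finset.mem_filter.mp hk0K).2
    have hsub : B ⊆ Finset.univ \ ((Finset.univ.filter fun j => j < k0).biUnion C) := by
      intro i hi
      rw [Finset.mem_sdiff]
      refine ⟨Finset.mem_univ i, ?_⟩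
      intro hmem
      rw [Finset.mem_biUnion] at hmem
      obtain ⟨j, hj, hij⟩ := hmem
      have hjlt : j < k0 := (Finset.mem_filter.mp hj).2
      have hjK : j ∈ K := by
        rw [hK]; simp only [Finset.mem_filter]; exact ⟨Finset.mem_univ j, i, hi, hij⟩
      have := hk0min j hjK
      simp only [id] at this
      exact absurd hjlt (not_lt.mpr this)
    have hle := hmax k0 B hsub hBclique
    have hlt := (hmain j0 hj0B k0 hj0C).2
    omega
  refine ⟨key, ?_⟩
  have hCinj : Function.Injective C := by
    intro i j h
    by_contra hij
    have hd := hdisj i j hij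
    rw [h] at hd
    exact (hne j).ne_empty (by simpa using disjoint_self.mp hd)
  refine ⟨⟨Finset.image C Finset.univ, ?_, ?_, ?_⟩, ?_⟩
  · rw [Finset.supIndep_iff_pairwiseDisjoint]
    intro s hs t ht hst
    simp only [Finset.coe_image, Set.mem_image] at hs ht
    obtain ⟨i, _, rfl⟩ := hs
    obtain ⟨j, _, rfl⟩ := ht
    exact hdisj i j (fun h => hst (congrArg C h))
  · rw [Finset.sup_image]
    simpa [Finset.sup_eq_biUnion] using hcover
  · intro h
    rw [Finset.mem_image] at h
    obtain ⟨i, _, hi⟩ := h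
    exact (hne i).ne_empty (by simpa using hi)
  · exact key _ rfl
end

section
/- Let Π = {C_1, ..., C_p} be a partition of the agent set A of an enemy-oriented hedonic game without neutrals, with coalitions indexed so that |C_1| ≥ |C_2| ≥ ... ≥ |C_p|. Then there exists a coalition blocking Π if and only if either some C_k is not a clique in the friendship graph G^f, or there exists k ∈ {1,...,p} such that the subgraph of G^f induced by A \ (C_1 ∪ ... ∪ C_{k-1}) contains a clique with |C_k| + 1 vertices. -/
open scoped Classical

variable {A : Type*}

variable [Fintype A] [DecidableEq A]

private lemma enemiesIn_eq_zero_iff {G : SimpleGraph A} {i : A} {S : Finset A} :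
    enemiesIn G i S = 0 ↔ ∀ j ∈ S, j ≠ i → G.Adj i j := by
  unfold enemiesIn
  simp only [Finset.card_eq_zero, Finset.filter_eq_empty_iff, not_and, not_not]

private lemma enemiesIn_pos {G : SimpleGraph A} {i j : A} {S : Finset A}
    (hj : j ∈ S) (hne : j ≠ i) (hnadj : ¬ G.Adj i j) : 0 < enemiesIn G i S := by
  unfold enemiesIn
  refine Finset.card_pos.mpr ⟨j, ?_⟩
  simp only [Finset.mem_filter]
  exact ⟨hj, hne, hnadj⟩

private lemma enemiesIn_eq_zero_of_clique {G : SimpleGraph A} {S : Finset A}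
    (h : G.IsClique (S : Set A)) {i : A} (hi : i ∈ S) : enemiesIn G i S = 0 :=
  enemiesIn_eq_zero_iff.mpr (fun _ hj hne => h hi hj (Ne.symm hne))

private lemma friendsIn_of_clique {G : SimpleGraph A} {S : Finset A}
    (h : G.IsClique (S : Set A)) {i : A} (hi : i ∈ S) :
    friendsIn G i S = S.card - 1 := by
  unfold friendsIn
  have : S.filter (fun j => G.Adj i j) = S.erase i := by
    ext j
    simp only [Finset.mem_filter, Finset.mem_erase]
    constructor
    · rintro ⟨hj, hadj⟩; exact ⟨(G.ne_of_adj hadj).symm, hj⟩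
    · rintro ⟨hne, hj⟩; exact ⟨hj, h hi hj (Ne.symm hne)⟩
  rw [this, Finset.card_erase_of_mem hi]

private lemma friendsIn_le_card_sub_one {G : SimpleGraph A} {S : Finset A} {i : A}
    (hi : i ∈ S) : friendsIn G i S ≤ S.card - 1 := by
  unfold friendsIn
  calc (S.filter fun j => G.Adj i j).card ≤ (S.erase i).card := by
        apply Finset.card_le_card
        intro j hj
        obtain ⟨hj1, hj2⟩ := Finset.mem_filter.mp hj
        exact Finset.mem_erase.mpr ⟨(G.ne_of_adj hj2).symm, hj1⟩
    _ ≤ S.card - 1 := le_of_eq (Finset.card_erase_of_mem hi)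

/-- For a partition with parts `C 0 ⊇-size ... ⊇-size C (p-1)` ordered by
non-increasing cardinality, a blocking coalition exists iff some part is not a clique of
the friendship graph, or for some `k` the subgraph induced on the agents outside the
first `k` parts contains a clique with `|C k| + 1` vertices. -/
theorem stmt_2 [Nonempty A] (G : SimpleGraph A)
    (P : Finpartition (Finset.univ : Finset A)) (p : ℕ) (C : Fin p → Finset A)
    (hinj : Function.Injective C)
    (hparts : P.parts = Finset.image C Finset.univ)
    (hmono : ∀ i j : Fin p, i ≤ j → (C j).card ≤ (C i).card) :
    (∃ B : Finset A, Blocks G P B) ↔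
      ((∃ k : Fin p, ¬ G.IsClique ((C k : Finset A) : Set A)) ∨
        ∃ k : Fin p, ∃ D : Finset A,
          D ⊆ Finset.univ \ ((Finset.univ.filter fun j => j < k).biUnion C) ∧
          G.IsClique (D : Set A) ∧ D.card = (C k).card + 1) := by
  have hCmem : ∀ k : Fin p, C k ∈ P.parts := by
    intro k; rw [hparts]; exact Finset.mem_image_of_mem C (Finset.mem_univ k)
  constructor
  · rintro ⟨B, hBne, hB⟩
    by_contra hcon
    push_neg at hcon
    obtain ⟨hclique, hno⟩ := hcon
    -- every agent of B lies in some part C k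
    have hpart : ∀ i ∈ B, ∃ k : Fin p, i ∈ C k := by
      intro i _
      obtain ⟨t, ht, hit⟩ := P.exists_mem (Finset.mem_univ i)
      rw [hparts] at ht
      obtain ⟨k, -, rfl⟩ := Finset.mem_image.mp ht
      exact ⟨k, hit⟩
    have key : ∀ i ∈ B, ∀ k : Fin p, i ∈ C k →
        enemiesIn G i B = 0 ∧ (C k).card + 1 ≤ B.card := by
      intro i hiB k hik
      have hpref := hB i hiB (C k) (hCmem k) hik
      have he : enemiesIn G i (C k) = 0 := enemiesIn_eq_zero_of_clique (hclique k) hik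
      have hf : friendsIn G i (C k) = (C k).card - 1 := friendsIn_of_clique (hclique k) hik
      rcases hpref with h | ⟨h1, h2⟩
      · omega
      · refine ⟨by omega, ?_⟩
        have h3 : friendsIn G i B ≤ B.card - 1 := friendsIn_le_card_sub_one hiB
        have h4 : 1 ≤ (C k).card := Finset.card_pos.mpr ⟨i, hik⟩
        have h5 : 1 ≤ B.card := Finset.card_pos.mpr ⟨i, hiB⟩
        omega
    -- B is a clique
    have hBclique : G.IsClique (B : Set A) := by
      intro x hx y hy hxy
      obtain ⟨k, hk⟩ := hpart x hx
      exact enemiesIn_eq_zero_iff.mp (key x hx k hk).1 y hy (Ne.symm hxy)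
    -- minimal index meeting B
    have hsne : (Finset.univ.filter fun k : Fin p => ∃ i ∈ B, i ∈ C k).Nonempty := by
      obtain ⟨i, hi⟩ := hBne
      obtain ⟨k, hk⟩ := hpart i hi
      exact ⟨k, Finset.mem_filter.mpr ⟨Finset.mem_univ k, i, hi, hk⟩⟩
    set k₀ := (Finset.univ.filter fun k : Fin p => ∃ i ∈ B, i ∈ C k).min' hsne with hk₀
    have hk₀mem := Finset.min'_mem _ hsne
    rw [Finset.mem_filter] at hk₀mem
    obtain ⟨-, i, hiB, hik⟩ := hk₀mem
    have hcard : (C k₀).card + 1 ≤ B.card := (key i hiB k₀ hik).2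
    obtain ⟨D, hDB, hDcard⟩ := Finset.exists_subset_card_eq hcard
    refine hno k₀ D ?_ (hBclique.subset (by exact_mod_cast hDB)) hDcard
    intro x hx
    rw [Finset.mem_sdiff]
    refine ⟨Finset.mem_univ x, ?_⟩
    intro hmem
    rw [Finset.mem_biUnion] at hmem
    obtain ⟨j, hj, hxj⟩ := hmem
    rw [Finset.mem_filter] at hj
    have : k₀ ≤ j := Finset.min'_le _ j
      (Finset.mem_filter.mpr ⟨Finset.mem_univ j, x, hDB hx, hxj⟩)
    exact absurd hj.2 (not_lt.mpr this)
  · rintro (⟨k, hk⟩ | ⟨k, D, hDsub, hDcl, hDcard⟩)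
    · rw [SimpleGraph.isClique_iff, Set.Pairwise] at hk
      push_neg at hk
      obtain ⟨x, hx, y, hy, hxy, hnadj⟩ := hk
      rw [Finset.mem_coe] at hx hy
      refine ⟨{x}, Finset.singleton_nonempty x, ?_⟩
      intro i hi C' hC' hiC'
      have hix : i = x := Finset.mem_singleton.mp hi
      have hC'eq : C' = C k := P.eq_of_mem_parts hC' (hCmem k) hiC' (hix ▸ hx)
      left
      have h1 : enemiesIn G i {x} = 0 :=
        enemiesIn_eq_zero_iff.mpr (fun j hj hne =>
          absurd ((Finset.mem_singleton.mp hj).trans hix.symm) hne)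
      have h2 : 0 < enemiesIn G i C' :=
        enemiesIn_pos (S := C') (j := y) (by rw [hC'eq]; exact hy)
          (by rw [hix]; exact Ne.symm hxy) (by rw [hix]; exact hnadj)
      omega
    · refine ⟨D, Finset.card_pos.mp (by omega), ?_⟩
      intro i hi C' hC' hiC'
      obtain ⟨j, -, rfl⟩ := Finset.mem_image.mp (hparts ▸ hC')
      have hkj : k ≤ j := by
        by_contra hlt
        have := hDsub hi
        rw [Finset.mem_sdiff] at this
        exact this.2 (Finset.mem_biUnion.mpr
          ⟨j, Finset.mem_filter.mpr ⟨Finset.mem_univ j, not_le.mp hlt⟩, hiC'⟩)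
      have hjcard : (C j).card ≤ (C k).card := hmono k j hkj
      have heD : enemiesIn G i D = 0 := enemiesIn_eq_zero_of_clique hDcl hi
      have hfD : friendsIn G i D = (C k).card := by
        rw [friendsIn_of_clique hDcl hi, hDcard]; omega
      rcases Nat.eq_zero_or_pos (enemiesIn G i (C j)) with h | h
      · right
        refine ⟨by omega, ?_⟩
        have h3 : friendsIn G i (C j) ≤ (C j).card - 1 := friendsIn_le_card_sub_one hiC'
        have h4 : 1 ≤ (C j).card := Finset.card_pos.mpr ⟨i, hiC'⟩
        omega
      · left; omega
end

section
/- Let X_n, ..., X_1 be the layer sets of the friendship graph G^f obtained by iterated clique peeling. A partition Π of the agent set A is strictly core stable if and only if every coalition of Π is a clique in G^f and, for every j ∈ {1,...,n}, every agent in X_j belongs to a coalition of Π that has exactly j members, all of which belong to X_j. -/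
open scoped Classical
set_option linter.unusedSectionVars false

variable {A : Type*}

variable [Fintype A] [DecidableEq A]

/-- The set of vertices of `V` that lie in some clique with exactly `k` vertices of the
subgraph of `G` induced by `V`. -/
noncomputable def cliqueLayer (G : SimpleGraph A) (V : Finset A) (k : ℕ) : Finset A :=
  V.filter fun v => ∃ D : Finset A, D ⊆ V ∧ v ∈ D ∧ G.IsNClique k D

/-- `remainingAfter G n j` is the set `V'_{n-j}` of vertices remaining after the first `j`
peeling steps of the iterated clique peeling (starting from all of `A` at `j = 0`). -/
noncomputable def remainingAfter (G : SimpleGraph A) (n : ℕ) : ℕ → Finset A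
  | 0 => Finset.univ
  | j + 1 => remainingAfter G n j \ cliqueLayer G (remainingAfter G n j) (n - j)

/-- The layer set `X_k` of the iterated clique peeling of `G` (with `n = |A|`):
the vertices of `V'_k` lying in some clique with exactly `k` vertices of the subgraph
induced by `V'_k`. -/
noncomputable def layerX (G : SimpleGraph A) (n k : ℕ) : Finset A :=
  cliqueLayer G (remainingAfter G n (n - k)) k

section Aux

variable [Fintype A] [DecidableEq A]

lemma friendsIn_clique (G : SimpleGraph A) {C : Finset A} (hC : G.IsClique (C : Set A))
    {i : A} (hi : i ∈ C) : friendsIn G i C = C.card - 1 := by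
  unfold friendsIn
  rw [show C.filter (fun j => G.Adj i j) = C.erase i from ?_, Finset.card_erase_of_mem hi]
  ext j
  simp only [Finset.mem_filter, Finset.mem_erase]
  constructor
  · rintro ⟨hj, hadj⟩; exact ⟨hadj.ne', hj⟩
  · rintro ⟨hne, hj⟩
    exact ⟨hj, hC (Finset.mem_coe.mpr hi) (Finset.mem_coe.mpr hj) (Ne.symm hne)⟩

lemma enemiesIn_clique (G : SimpleGraph A) {C : Finset A} (hC : G.IsClique (C : Set A))
    {i : A} (hi : i ∈ C) : enemiesIn G i C = 0 := by
  unfold enemiesIn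
  rw [Finset.card_eq_zero]
  apply Finset.eq_empty_of_forall_notMem
  intro j hj
  simp only [Finset.mem_filter] at hj
  obtain ⟨hj, hne, hadj⟩ := hj
  exact hadj (hC (Finset.mem_coe.mpr hi) (Finset.mem_coe.mpr hj) (Ne.symm hne))

lemma clique_of_enemies_zero (G : SimpleGraph A) {B : Finset A}
    (h : ∀ i ∈ B, enemiesIn G i B = 0) : G.IsClique (B : Set A) := by
  intro x hx y hy hxy
  by_contra hadj
  have hpos : 0 < enemiesIn G x B := by
    unfold enemiesIn
    refine Finset.card_pos.mpr ⟨y, ?_⟩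
    simp only [Finset.mem_filter]
    exact ⟨Finset.mem_coe.mp hy, Ne.symm hxy, hadj⟩
  have := h x (Finset.mem_coe.mp hx)
  omega

lemma remainingAfter_succ (G : SimpleGraph A) (n t : ℕ) :
    remainingAfter G n (t + 1) =
      remainingAfter G n t \ cliqueLayer G (remainingAfter G n t) (n - t) := rfl

lemma remainingAfter_mono (G : SimpleGraph A) (n : ℕ) {s t : ℕ} (h : s ≤ t) :
    remainingAfter G n t ⊆ remainingAfter G n s := by
  induction t with
  | zero => simp_all
  | succ t ih =>
    rcases Nat.lt_or_ge s (t + 1) with h' | h'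
    · exact (Finset.sdiff_subset).trans (ih (by omega))
    · have : s = t + 1 := by omega
      subst this; exact subset_rfl

lemma exists_flip {f : ℕ → Prop} {n : ℕ} (h0 : f 0) (hn : ¬ f n) :
    ∃ s, s < n ∧ f s ∧ ¬ f (s + 1) := by
  induction n with
  | zero => exact absurd h0 hn
  | succ m ih =>
    by_cases hm : f m
    · exact ⟨m, Nat.lt_succ_self m, hm, hn⟩
    · obtain ⟨s, hs, h1, h2⟩ := ih hm
      exact ⟨s, hs.trans (Nat.lt_succ_self m), h1, h2⟩

lemma exists_layerX (G : SimpleGraph A) {n k : ℕ} (hk : k ≤ n) {u : A}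
    (hu : u ∉ remainingAfter G n (n - k)) :
    ∃ j, k < j ∧ j ≤ n ∧ u ∈ layerX G n j := by
  obtain ⟨s, hs, h1, h2⟩ := exists_flip (f := fun s => u ∈ remainingAfter G n s)
    (by simp [remainingAfter]) hu
  refine ⟨n - s, by omega, by omega, ?_⟩
  have hmem : u ∈ cliqueLayer G (remainingAfter G n s) (n - s) := by
    rw [remainingAfter_succ, Finset.mem_sdiff] at h2
    by_contra h
    exact h2 ⟨h1, h⟩
  unfold layerX
  rwa [show n - (n - s) = s by omega]

lemma notMem_remaining_of_layer (G : SimpleGraph A) {n j : ℕ} (hj : j ≤ n) {v : A}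
    (hv : v ∈ layerX G n j) : v ∉ remainingAfter G n (n - j + 1) := by
  intro hmem
  rw [remainingAfter_succ, Finset.mem_sdiff] at hmem
  apply hmem.2
  unfold layerX at hv
  rwa [show n - (n - j) = j by omega]

lemma clique_card_le (G : SimpleGraph A) :
    ∀ (t : ℕ) (D : Finset A), D ⊆ remainingAfter G (Fintype.card A) t →
      G.IsClique (D : Set A) → D.card ≤ Fintype.card A - t := by
  intro t
  induction t with
  | zero => intro D _ _; simpa using Finset.card_le_univ D
  | succ t ih =>
    intro D hD hcl
    by_contra h
    push_neg at h
    set n := Fintype.card A with hn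
    have hDt : D ⊆ remainingAfter G n t := by
      rw [remainingAfter_succ] at hD
      exact hD.trans Finset.sdiff_subset
    have hle := ih D hDt hcl
    have ht : t < n := by omega
    have hcard : D.card = n - t := by omega
    obtain ⟨v, hv⟩ := Finset.card_pos.mp (by omega : 0 < D.card)
    have hlayer : v ∈ cliqueLayer G (remainingAfter G n t) (n - t) :=
      Finset.mem_filter.mpr ⟨hDt hv, D, hDt, hv, hcl, hcard⟩
    have hmem := hD hv
    rw [remainingAfter_succ, Finset.mem_sdiff] at hmem
    exact hmem.2 hlayer

lemma remainingAfter_card_eq_empty (G : SimpleGraph A) {n : ℕ} (hn : 1 ≤ n) :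
    remainingAfter G n n = ∅ := by
  obtain ⟨m, rfl⟩ : ∃ m, n = m + 1 := ⟨n - 1, by omega⟩
  rw [remainingAfter_succ, Finset.sdiff_eq_empty_iff_subset]
  intro v hv
  refine Finset.mem_filter.mpr ⟨hv, {v}, by simpa using hv, Finset.mem_singleton_self v, ?_⟩
  rw [show m + 1 - m = 1 by omega]
  constructor
  · simp [SimpleGraph.isClique_iff, Set.Pairwise]
  · simp

lemma cover_layerX [Nonempty A] (G : SimpleGraph A) (u : A) :
    ∃ j, 1 ≤ j ∧ j ≤ Fintype.card A ∧ u ∈ layerX G (Fintype.card A) j := by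
  have hn : 1 ≤ Fintype.card A := Fintype.card_pos
  obtain ⟨j, hj1, hj2, hj3⟩ := exists_layerX G (Nat.zero_le _) (u := u)
    (by rw [Nat.sub_zero, remainingAfter_card_eq_empty G hn]; exact Finset.notMem_empty u)
  exact ⟨j, hj1, hj2, hj3⟩

end Aux

/-- A partition is strictly core stable iff each of its coalitions is a
clique of the friendship graph and, for every `j`, every agent of the layer set `X_j`
lies in a coalition with exactly `j` members, all belonging to `X_j`. -/
theorem stmt_3 [Nonempty A] (G : SimpleGraph A)
    (P : Finpartition (Finset.univ : Finset A)) :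
    StrictlyCoreStable G P ↔
      ((∀ C ∈ P.parts, G.IsClique (C : Set A)) ∧
        ∀ j ∈ Finset.Icc 1 (Fintype.card A), ∀ v ∈ layerX G (Fintype.card A) j,
          ∀ C ∈ P.parts, v ∈ C → C.card = j ∧ C ⊆ layerX G (Fintype.card A) j) := by
  constructor
  · intro hstab
    have hcliq : ∀ C ∈ P.parts, G.IsClique (C : Set A) := by
      intro C hC x hx y hy hxy
      by_contra hadj
      apply hstab {x}
      have hx' : x ∈ C := Finset.mem_coe.mp hx
      have hen : 0 < enemiesIn G x C := by
        unfold enemiesIn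
        refine Finset.card_pos.mpr ⟨y, ?_⟩
        simp only [Finset.mem_filter]
        exact ⟨Finset.mem_coe.mp hy, Ne.symm hxy, hadj⟩
      have he1 : enemiesIn G x {x} = 0 := by
        unfold enemiesIn
        rw [Finset.card_eq_zero]
        apply Finset.eq_empty_of_forall_notMem
        intro j hj
        simp only [Finset.mem_filter, Finset.mem_singleton] at hj
        exact hj.2.1 hj.1
      have hxpref : ∀ C' ∈ P.parts, x ∈ C' → Prefers G x {x} C' := by
        intro C' hC' hxC'
        have hCC : C' = C := P.eq_of_mem_parts hC' hC hxC' hx'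
        subst hCC
        exact Or.inl (by omega)
      refine ⟨Finset.singleton_nonempty x, ?_, x, Finset.mem_singleton_self x, hxpref⟩
      intro i hi C' hC' hiC'
      rw [Finset.mem_singleton] at hi; subst hi
      have hCC : C' = C := P.eq_of_mem_parts hC' hC hiC' hx'
      subst hCC
      intro hpref'
      rcases hpref' with h | ⟨h, _⟩ <;> omega
    refine ⟨hcliq, ?_⟩
    have key : ∀ d k, 1 ≤ k → k ≤ Fintype.card A → Fintype.card A - k < d →
        ∀ v ∈ layerX G (Fintype.card A) k, ∀ C ∈ P.parts, v ∈ C →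
          C.card = k ∧ C ⊆ layerX G (Fintype.card A) k := by
      intro d
      induction d with
      | zero => intro k _ _ h; omega
      | succ d ih =>
        intro k hk1 hkn hkd v hv C hC hvC
        have L1 : ∀ C' ∈ P.parts, ∀ w ∈ C',
            w ∈ remainingAfter G (Fintype.card A) (Fintype.card A - k) →
            C' ⊆ remainingAfter G (Fintype.card A) (Fintype.card A - k) := by
          intro C' hC' w hwC' hwW u hu
          by_contra hu'
          obtain ⟨j, hjk, hjn, hjX⟩ := exists_layerX G hkn hu'
          have hQ := ih j (by omega) hjn (by omega) u hjX C' hC' hu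
          have hwX : w ∈ layerX G (Fintype.card A) j := hQ.2 hwC'
          have hwR : w ∈ remainingAfter G (Fintype.card A) (Fintype.card A - j + 1) :=
            remainingAfter_mono G (Fintype.card A) (by omega) hwW
          exact notMem_remaining_of_layer G hjn hwX hwR
        simp only [layerX, cliqueLayer, Finset.mem_filter] at hv
        obtain ⟨hvW, D, hD, hvD, hDk⟩ := hv
        have hCW : C ⊆ remainingAfter G (Fintype.card A) (Fintype.card A - k) :=
          L1 C hC v hvC hvW
        have hcard_le : ∀ C' ∈ P.parts,
            C' ⊆ remainingAfter G (Fintype.card A) (Fintype.card A - k) → C'.card ≤ k := by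
          intro C' hC' hsub
          have := clique_card_le G (Fintype.card A - k) C' hsub (hcliq C' hC')
          omega
        have hcard : C.card = k := by
          by_contra hne
          have hlt : C.card < k := lt_of_le_of_ne (hcard_le C hC hCW) hne
          apply hstab D
          refine ⟨⟨v, hvD⟩, ?_, v, hvD, ?_⟩
          · intro i hi C' hC' hiC'
            have hC'W : C' ⊆ remainingAfter G (Fintype.card A) (Fintype.card A - k) :=
              L1 C' hC' i hiC' (hD hi)
            have h1 : enemiesIn G i D = 0 := enemiesIn_clique G hDk.isClique hi
            have h2 : enemiesIn G i C' = 0 := enemiesIn_clique G (hcliq C' hC') hiC'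
            have h3 : friendsIn G i D = k - 1 := by
              rw [friendsIn_clique G hDk.isClique hi, hDk.card_eq]
            have h4 : friendsIn G i C' = C'.card - 1 := friendsIn_clique G (hcliq C' hC') hiC'
            have h5 : C'.card ≤ k := hcard_le C' hC' hC'W
            intro hpref
            rcases hpref with h | ⟨_, h⟩ <;> omega
          · intro C' hC' hvC'
            have hCC : C' = C := P.eq_of_mem_parts hC' hC hvC' hvC
            subst hCC
            have h1 : enemiesIn G v D = 0 := enemiesIn_clique G hDk.isClique hvD
            have h2 : enemiesIn G v C' = 0 := enemiesIn_clique G (hcliq C' hC') hvC'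
            have h3 : friendsIn G v D = k - 1 := by
              rw [friendsIn_clique G hDk.isClique hvD, hDk.card_eq]
            have h4 : friendsIn G v C' = C'.card - 1 := friendsIn_clique G (hcliq C' hC') hvC'
            have h6 : 1 ≤ C'.card := Finset.card_pos.mpr ⟨v, hvC'⟩
            exact Or.inr ⟨by omega, by omega⟩
        refine ⟨hcard, ?_⟩
        intro u hu
        simp only [layerX, cliqueLayer, Finset.mem_filter]
        exact ⟨hCW hu, C, hCW, hu, hcliq C hC, hcard⟩
    intro j hj v hv C hC hvC
    rw [Finset.mem_Icc] at hj
    exact key (Fintype.card A + 1) j hj.1 hj.2 (by omega) v hv C hC hvC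
  · rintro ⟨hcliq, hlay⟩ B ⟨hBne, hweak, i0, hi0, hpref⟩
    have hB0 : ∀ i ∈ B, enemiesIn G i B = 0 := by
      intro i hi
      obtain ⟨C, hC, hiC⟩ := P.exists_mem (Finset.mem_univ i)
      have hw := hweak i hi C hC hiC
      by_contra hne
      exact hw (Or.inl (by rw [enemiesIn_clique G (hcliq C hC) hiC]; omega))
    have hBcl := clique_of_enemies_zero G hB0
    have hcardB : ∀ i ∈ B, ∀ C ∈ P.parts, i ∈ C → C.card ≤ B.card := by
      intro i hi C hC hiC
      have hw := hweak i hi C hC hiC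
      by_contra h
      push_neg at h
      refine hw (Or.inr ⟨?_, ?_⟩)
      · rw [enemiesIn_clique G (hcliq C hC) hiC, enemiesIn_clique G hBcl hi]
      · rw [friendsIn_clique G hBcl hi, friendsIn_clique G (hcliq C hC) hiC]
        have h1 : 1 ≤ C.card := Finset.card_pos.mpr ⟨i, hiC⟩
        have h2 : 1 ≤ B.card := Finset.card_pos.mpr ⟨i, hi⟩
        omega
    have hmn : B.card ≤ Fintype.card A := Finset.card_le_univ B
    have hBsub : B ⊆ remainingAfter G (Fintype.card A) (Fintype.card A - B.card) := by
      intro i hi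
      obtain ⟨j, hj1, hjn, hjX⟩ := cover_layerX G i
      obtain ⟨C, hC, hiC⟩ := P.exists_mem (Finset.mem_univ i)
      have hcj := (hlay j (Finset.mem_Icc.mpr ⟨hj1, hjn⟩) i hjX C hC hiC).1
      have hjm : j ≤ B.card := by rw [← hcj]; exact hcardB i hi C hC hiC
      have hiR : i ∈ remainingAfter G (Fintype.card A) (Fintype.card A - j) := by
        simp only [layerX, cliqueLayer, Finset.mem_filter] at hjX
        exact hjX.1
      exact remainingAfter_mono G (Fintype.card A) (by omega) hiR
    have hi0X : i0 ∈ layerX G (Fintype.card A) B.card := by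
      simp only [layerX, cliqueLayer, Finset.mem_filter]
      exact ⟨hBsub hi0, B, hBsub, hi0, hBcl, rfl⟩
    obtain ⟨C0, hC0, hiC0⟩ := P.exists_mem (Finset.mem_univ i0)
    have h1 : 1 ≤ B.card := Finset.card_pos.mpr ⟨i0, hi0⟩
    have hc0 := (hlay B.card (Finset.mem_Icc.mpr ⟨h1, hmn⟩) i0 hi0X C0 hC0 hiC0).1
    have hp := hpref C0 hC0 hiC0
    rcases hp with h | ⟨_, h⟩
    · rw [enemiesIn_clique G hBcl hi0, enemiesIn_clique G (hcliq C0 hC0) hiC0] at h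
      omega
    · rw [friendsIn_clique G hBcl hi0, friendsIn_clique G (hcliq C0 hC0) hiC0] at h
      have h2 : 1 ≤ C0.card := Finset.card_pos.mpr ⟨i0, hiC0⟩
      omega
end

section
/- An enemy-oriented hedonic game without neutrals admits a strictly core stable partition all of whose coalitions have at most 2 agents if and only if the friendship graph G^f contains no triangle (clique on 3 vertices) and the subgraph of G^f induced by the set of vertices of degree at least one has a perfect matching. -/
open scoped Classical

variable {A : Type*}

-- Auxiliary lemmas --------------------------------------------------------

lemma prefers_asymm {G : SimpleGraph A} {i : A} {S T : Finset A}
    (h : Prefers G i S T) : ¬ Prefers G i T S := by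
  rcases h with h | ⟨h1, h2⟩ <;> rintro (h' | ⟨h1', h2'⟩) <;> omega

lemma enemiesIn_eq_zero {G : SimpleGraph A} {i : A} {S : Finset A}
    (h : ∀ j ∈ S, j ≠ i → G.Adj i j) : enemiesIn G i S = 0 := by
  rw [enemiesIn, Finset.card_eq_zero, Finset.filter_eq_empty_iff]
  rintro j hj ⟨hne, hnadj⟩
  exact hnadj (h j hj hne)

lemma adj_of_enemiesIn_eq_zero {G : SimpleGraph A} {i j : A} {S : Finset A}
    (h : enemiesIn G i S = 0) (hj : j ∈ S) (hne : j ≠ i) : G.Adj i j := by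
  by_contra hadj
  rw [enemiesIn, Finset.card_eq_zero] at h
  have : j ∈ (S.filter fun j => j ≠ i ∧ ¬ G.Adj i j) := Finset.mem_filter.2 ⟨hj, hne, hadj⟩
  rw [h] at this
  exact absurd this (Finset.notMem_empty j)

lemma one_le_enemiesIn {G : SimpleGraph A} {i j : A} {S : Finset A}
    (hj : j ∈ S) (hne : j ≠ i) (h : ¬ G.Adj i j) : 0 < enemiesIn G i S :=
  Finset.card_pos.2 ⟨j, Finset.mem_filter.2 ⟨hj, hne, h⟩⟩

lemma one_le_friendsIn {G : SimpleGraph A} {i j : A} {S : Finset A}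
    (hj : j ∈ S) (h : G.Adj i j) : 0 < friendsIn G i S :=
  Finset.card_pos.2 ⟨j, Finset.mem_filter.2 ⟨hj, h⟩⟩

lemma two_le_friendsIn {G : SimpleGraph A} {i j k : A} {S : Finset A}
    (hj : j ∈ S) (hk : k ∈ S) (hjk : j ≠ k) (h1 : G.Adj i j) (h2 : G.Adj i k) :
    2 ≤ friendsIn G i S :=
  Finset.one_lt_card.2 ⟨j, Finset.mem_filter.2 ⟨hj, h1⟩, k, Finset.mem_filter.2 ⟨hk, h2⟩, hjk⟩

lemma friendsIn_le_erase [DecidableEq A] {G : SimpleGraph A} {i : A} {S : Finset A} :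
    friendsIn G i S ≤ (S.erase i).card := by
  apply Finset.card_le_card
  intro j hj
  rw [Finset.mem_filter] at hj
  exact Finset.mem_erase.2 ⟨hj.2.ne', hj.1⟩

lemma friendsIn_singleton {G : SimpleGraph A} {i : A} : friendsIn G i {i} = 0 := by
  simp [friendsIn, Finset.filter_singleton]

lemma exists_adj_of_friendsIn_pos {G : SimpleGraph A} {i : A} {S : Finset A}
    (h : 0 < friendsIn G i S) : ∃ j ∈ S, G.Adj i j := by
  rw [friendsIn, Finset.card_pos] at h
  obtain ⟨j, hj⟩ := h
  rw [Finset.mem_filter] at hj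
  exact ⟨j, hj.1, hj.2⟩


variable [Fintype A] [DecidableEq A]

/-- There is a strictly core stable partition whose coalitions all have at
most two agents iff the friendship graph has no triangle and the subgraph induced by the
vertices of degree at least one has a perfect matching. -/
theorem stmt_6 [Nonempty A] (G : SimpleGraph A) [DecidableRel G.Adj] :
    (∃ P : Finpartition (Finset.univ : Finset A),
        StrictlyCoreStable G P ∧ ∀ C ∈ P.parts, C.card ≤ 2) ↔
      (G.CliqueFree 3 ∧
        ∃ M : G.Subgraph, M.verts = {v : A | 0 < G.degree v} ∧ M.IsMatching) := by
  constructor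
  · rintro ⟨P, hP, hcard⟩
    -- every part is a clique
    have hclique : ∀ C ∈ P.parts, ∀ i ∈ C, ∀ j ∈ C, j ≠ i → G.Adj i j := by
      intro C hC i hi j hj hne
      by_contra hadj
      apply hP {i}
      have h0 : enemiesIn G i ({i} : Finset A) = 0 := enemiesIn_eq_zero (by simp)
      have h1 : 0 < enemiesIn G i C := one_le_enemiesIn hj hne hadj
      refine ⟨Finset.singleton_nonempty i, ?_, i, Finset.mem_singleton_self i, ?_⟩
      · intro k hk C' hC' hkC'
        rw [Finset.mem_singleton] at hk; subst hk
        have hC'C : C' = C := P.eq_of_mem_parts hC' hC hkC' hi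
        subst hC'C
        rintro (h | ⟨h, h'⟩) <;> omega
      · intro C' hC' hiC'
        have hC'C : C' = C := P.eq_of_mem_parts hC' hC hiC' hi
        subst hC'C
        left; omega
    -- enemies in own part are zero
    have hen0 : ∀ C ∈ P.parts, ∀ i ∈ C, enemiesIn G i C = 0 := fun C hC i hi =>
      enemiesIn_eq_zero (fun j hj hne => hclique C hC i hi j hj hne)
    -- friends in own part ≤ 1
    have hfr1 : ∀ C ∈ P.parts, ∀ i ∈ C, friendsIn G i C ≤ 1 := by
      intro C hC i hi
      have := friendsIn_le_erase (G := G) (i := i) (S := C)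
      rw [Finset.card_erase_of_mem hi] at this
      have := hcard C hC
      omega
    -- every vertex of positive degree lies in a part {v, w} with v ~ w
    have hpart2 : ∀ v : A, 0 < G.degree v → ∃ w, w ≠ v ∧ G.Adj v w ∧ P.part v = {v, w} := by
      intro v hv
      obtain ⟨w0, hw0⟩ := (G.degree_pos_iff_exists_adj v).1 hv
      have hvC := P.mem_part (Finset.mem_univ v)
      have hCmem := P.part_mem.2 (Finset.mem_univ v)
      rcases Nat.lt_or_ge (P.part v).card 2 with h2 | h2
      · exfalso
        have hsing : P.part v = {v} := by
          rw [Finset.eq_singleton_iff_unique_mem]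
          exact ⟨hvC, fun x hx => Finset.card_le_one.1 (by omega) x hx v hvC⟩
        apply hP {v, w0}
        have hvB : v ∈ ({v, w0} : Finset A) := Finset.mem_insert_self _ _
        have hw0B : w0 ∈ ({v, w0} : Finset A) := by simp
        have henBv : enemiesIn G v {v, w0} = 0 := by
          apply enemiesIn_eq_zero
          intro j hj hne
          rcases Finset.mem_insert.1 hj with rfl | hj
          · exact absurd rfl hne
          · rw [Finset.mem_singleton] at hj; subst hj; exact hw0
        have henBw : enemiesIn G w0 {v, w0} = 0 := by
          apply enemiesIn_eq_zero
          intro j hj hne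
          rcases Finset.mem_insert.1 hj with rfl | hj
          · exact hw0.symm
          · rw [Finset.mem_singleton] at hj; subst hj; exact absurd rfl hne
        have hfrBv : 0 < friendsIn G v {v, w0} := one_le_friendsIn hw0B hw0
        have hfrBw : 0 < friendsIn G w0 {v, w0} := one_le_friendsIn hvB hw0.symm
        refine ⟨⟨v, hvB⟩, ?_, v, hvB, ?_⟩
        · intro k hk C' hC' hkC'
          have hC'eq : P.part k = C' := P.part_eq_of_mem hC' hkC'
          rcases Finset.mem_insert.1 hk with rfl | hk
          · rw [← hC'eq, hsing]
            have h0 : enemiesIn G k ({k} : Finset A) = 0 := enemiesIn_eq_zero (by simp)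
            rintro (h | ⟨h, h'⟩)
            · omega
            · rw [friendsIn_singleton] at h'; omega
          · rw [Finset.mem_singleton] at hk; subst hk
            have he : enemiesIn G k C' = 0 := hen0 C' hC' k hkC'
            have hf : friendsIn G k C' ≤ 1 := hfr1 C' hC' k hkC'
            rintro (h | ⟨h, h'⟩) <;> omega
        · intro C' hC' hvC'
          have : C' = P.part v := (P.part_eq_of_mem hC' hvC').symm
          subst this
          rw [hsing]
          have h0 : enemiesIn G v ({v} : Finset A) = 0 := enemiesIn_eq_zero (by simp)
          right
          rw [friendsIn_singleton]
          omega
      · have h2' : (P.part v).card = 2 := le_antisymm (hcard _ hCmem) h2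
        obtain ⟨a, b, hab, habs⟩ := Finset.card_eq_two.1 h2'
        rw [habs] at hvC
        rcases Finset.mem_insert.1 hvC with rfl | hvb
        · exact ⟨b, hab.symm, hclique _ hCmem v (by rw [habs]; simp) b
            (by rw [habs]; simp) hab.symm |>.symm.symm, by rw [habs]⟩
        · rw [Finset.mem_singleton] at hvb; subst hvb
          refine ⟨a, hab, ?_, ?_⟩
          · exact hclique _ hCmem v (by rw [habs]; simp) a (by rw [habs]; simp) hab
          · rw [habs]; exact Finset.pair_comm a v
    constructor
    · -- triangle-free
      intro t ht
      obtain ⟨hcl, hcard3⟩ := ht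
      have hall : ∀ i ∈ t, ∀ C ∈ P.parts, i ∈ C → Prefers G i t C := by
        intro i hi C hC hiC
        have he : enemiesIn G i t = 0 := by
          apply enemiesIn_eq_zero
          intro j hj hne
          exact (hcl hj hi hne).symm
        have heC : enemiesIn G i C = 0 := hen0 C hC i hiC
        have hfC : friendsIn G i C ≤ 1 := hfr1 C hC i hiC
        -- two other vertices in t
        have herase : (t.erase i).card = 2 := by
          rw [Finset.card_erase_of_mem hi, hcard3]
        obtain ⟨j, k, hjk, hjks⟩ := Finset.card_eq_two.1 herase
        have hj : j ∈ t.erase i := by rw [hjks]; simp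
        have hk : k ∈ t.erase i := by rw [hjks]; simp
        have hft : 2 ≤ friendsIn G i t :=
          two_le_friendsIn (Finset.mem_of_mem_erase hj) (Finset.mem_of_mem_erase hk) hjk
            (hcl (Finset.mem_coe.2 hi) (Finset.mem_of_mem_erase hj) (Finset.ne_of_mem_erase hj).symm)
            (hcl (Finset.mem_coe.2 hi) (Finset.mem_of_mem_erase hk) (Finset.ne_of_mem_erase hk).symm)
        right
        exact ⟨by omega, by omega⟩
      apply hP t
      have htne : t.Nonempty := by rw [← Finset.card_pos, hcard3]; omega
      obtain ⟨i0, hi0⟩ := htne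
      exact ⟨⟨i0, hi0⟩, fun i hi C hC hiC => prefers_asymm (hall i hi C hC hiC),
        i0, hi0, hall i0 hi0⟩
    · -- the matching
      refine ⟨⟨{v : A | 0 < G.degree v}, fun u v => G.Adj u v ∧ ∃ C ∈ P.parts, u ∈ C ∧ v ∈ C,
          fun h => h.1, fun {u v} h => (G.degree_pos_iff_exists_adj u).2 ⟨v, h.1⟩, ?_⟩, rfl, ?_⟩
      · constructor; rintro u v ⟨h1, C, hC, h2, h3⟩
        exact ⟨h1.symm, C, hC, h3, h2⟩
      · intro v hv
        have hv' : 0 < G.degree v := hv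
        obtain ⟨w, hwv, hadj, hpart⟩ := hpart2 v hv'
        have hwmem : w ∈ P.part v := by rw [hpart]; simp
        refine ⟨w, ⟨hadj, P.part v, P.part_mem.2 (Finset.mem_univ v),
          P.mem_part (Finset.mem_univ v), hwmem⟩, ?_⟩
        rintro w' ⟨hadj', C, hC, hvC, hw'C⟩
        have hCeq : P.part v = C := P.part_eq_of_mem hC hvC
        rw [← hCeq, hpart] at hw'C
        rcases Finset.mem_insert.1 hw'C with rfl | hw'
        · exact absurd rfl hadj'.ne
        · exact Finset.mem_singleton.1 hw'
  · rintro ⟨hCF, M, hMv, hM⟩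
    -- the setoid whose classes are the matching pairs and isolated singletons
    have hequiv : Equivalence (fun i j : A => i = j ∨ M.Adj i j) := by
      refine ⟨fun i => Or.inl rfl, ?_, ?_⟩
      · rintro i j (rfl | h)
        · exact Or.inl rfl
        · exact Or.inr h.symm
      · rintro i j k (rfl | h1) h2
        · exact h2
        · rcases h2 with rfl | h2
          · exact Or.inr h1
          · left
            exact (hM (M.edge_vert h1.symm)).unique h1.symm h2
    let s : Setoid A := ⟨fun i j => i = j ∨ M.Adj i j, hequiv⟩
    haveI : DecidableRel s.r := fun _ _ => Classical.propDecidable _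
    let P := Finpartition.ofSetoid s
    have hmem : ∀ i j : A, j ∈ P.part i ↔ (i = j ∨ M.Adj i j) := fun i j =>
      Finpartition.mem_part_ofSetoid_iff_rel
    -- characterization of parts
    have hsing : ∀ i : A, i ∉ M.verts → P.part i = {i} := by
      intro i hi
      ext j
      rw [hmem, Finset.mem_singleton]
      constructor
      · rintro (rfl | h)
        · rfl
        · exact absurd (M.edge_vert h) hi
      · rintro rfl; exact Or.inl rfl
    have hpair : ∀ i w : A, M.Adj i w → P.part i = {i, w} := by
      intro i w hw
      ext j
      rw [hmem, Finset.mem_insert, Finset.mem_singleton]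
      constructor
      · rintro (rfl | h)
        · exact Or.inl rfl
        · exact Or.inr ((hM (M.edge_vert hw)).unique h hw)
      · rintro (rfl | rfl)
        · exact Or.inl rfl
        · exact Or.inr hw
    -- each part containing i equals P.part i
    have hparteq : ∀ i : A, ∀ C ∈ P.parts, i ∈ C → C = P.part i := fun i C hC hiC =>
      (P.part_eq_of_mem hC hiC).symm
    -- enemies in own part are 0
    have hen0 : ∀ i : A, enemiesIn G i (P.part i) = 0 := by
      intro i
      by_cases hi : i ∈ M.verts
      · obtain ⟨w, hw, -⟩ := hM hi
        rw [hpair i w hw]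
        apply enemiesIn_eq_zero
        intro j hj hne
        rcases Finset.mem_insert.1 hj with rfl | hj
        · exact absurd rfl hne
        · rw [Finset.mem_singleton] at hj; subst hj
          exact M.adj_sub hw
      · rw [hsing i hi]
        exact enemiesIn_eq_zero (by simp)
    refine ⟨P, ?_, ?_⟩
    · -- strict core stability
      rintro B ⟨hBne, hweak, i0, hi0B, hstrict⟩
      -- every member of B has zero enemies in B
      have hB0 : ∀ i ∈ B, enemiesIn G i B = 0 := by
        intro i hi
        have hw := hweak i hi (P.part i) (P.part_mem.2 (Finset.mem_univ i))
          (P.mem_part (Finset.mem_univ i))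
        rw [WeaklyPrefers] at hw
        by_contra h
        exact hw (Or.inl (by have := hen0 i; omega))
      -- B is a clique
      have hBcl : ∀ i ∈ B, ∀ j ∈ B, i ≠ j → G.Adj i j := fun i hi j hj hne =>
        adj_of_enemiesIn_eq_zero (hB0 i hi) hj hne.symm
      -- so |B| ≤ 2
      have hBcard : B.card ≤ 2 := by
        by_contra h
        obtain ⟨t, hts, htc⟩ := Finset.exists_subset_card_eq (s := B) (n := 3) (by omega)
        exact hCF t ⟨fun a ha b hb hne => hBcl a (hts ha) b (hts hb) hne, htc⟩
      -- the strictly improving agent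
      have hpref := hstrict (P.part i0) (P.part_mem.2 (Finset.mem_univ i0))
        (P.mem_part (Finset.mem_univ i0))
      have he0 := hen0 i0
      have heB0 := hB0 i0 hi0B
      have hfB : friendsIn G i0 B ≤ 1 := by
        have := friendsIn_le_erase (G := G) (i := i0) (S := B)
        rw [Finset.card_erase_of_mem hi0B] at this
        omega
      rcases hpref with h | ⟨h, h'⟩
      · omega
      · -- friendsIn (part i0) < friendsIn B ≤ 1, so friendsIn B = 1
        have hfBpos : 0 < friendsIn G i0 B := by omega
        obtain ⟨j, hjB, hjadj⟩ := exists_adj_of_friendsIn_pos hfBpos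
        have hi0v : i0 ∈ M.verts := by
          rw [hMv]
          exact (G.degree_pos_iff_exists_adj i0).2 ⟨j, hjadj⟩
        obtain ⟨w, hw, -⟩ := hM hi0v
        have : 0 < friendsIn G i0 (P.part i0) :=
          one_le_friendsIn (by rw [hpair i0 w hw]; simp) (M.adj_sub hw)
        omega
    · -- all parts have at most 2 members
      intro C hC
      obtain ⟨i, hi⟩ := P.nonempty_of_mem_parts hC
      rw [hparteq i C hC hi]
      by_cases hiv : i ∈ M.verts
      · obtain ⟨w, hw, -⟩ := hM hiv
        rw [hpair i w hw]
        exact Finset.card_insert_le _ _ |>.trans (by simp)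
      · rw [hsing i hiv]; simp
end

section
/- In every core stable partition of an enemy-oriented hedonic game without neutrals, the size of the largest coalition equals the clique number of the friendship graph G^f (the number of vertices of a maximum clique of G^f); the same holds for every strictly core stable partition. -/
open scoped Classical

variable {A : Type*}

variable [Fintype A] [DecidableEq A]

/-- In every core stable (or strictly core stable) partition, the size of
the largest coalition equals the clique number of the friendship graph, i.e. it is an
upper bound on the cardinality of every clique and is attained by some clique. -/
theorem stmt_8 [Nonempty A] (G : SimpleGraph A)
    (P : Finpartition (Finset.univ : Finset A))
    (h : CoreStable G P ∨ StrictlyCoreStable G P) :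
    (∀ D : Finset A, G.IsClique (D : Set A) → D.card ≤ P.parts.sup Finset.card) ∧
    (∃ D : Finset A, G.IsClique (D : Set A) ∧ D.card = P.parts.sup Finset.card) := by

  -- Strictly core stable implies core stable
  have hc : CoreStable G P := by
    rcases h with hc | hs
    · exact hc
    · intro B hB
      obtain ⟨hne, hall⟩ := hB
      refine hs B ⟨hne, ?_, ?_⟩
      · intro i hi C hC hiC
        have := hall i hi C hC hiC
        unfold WeaklyPrefers Prefers at *
        omega
      · obtain ⟨i, hi⟩ := hne
        exact ⟨i, hi, fun C hC hiC => hall i hi C hC hiC⟩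
  -- Each part is a clique
  have hclique : ∀ C ∈ P.parts, G.IsClique (C : Set A) := by
    intro C hC i hi j hj hij
    by_contra hadj
    apply hc {i}
    refine ⟨⟨i, Finset.mem_singleton_self i⟩, ?_⟩
    intro k hk C' hC' hkC'
    rw [Finset.mem_singleton] at hk
    subst hk
    have hCC' : C' = C := P.eq_of_mem_parts hC' hC hkC' hi
    subst hCC'
    left
    have h1 : enemiesIn G k {k} = 0 := by
      rw [enemiesIn, Finset.card_eq_zero, Finset.eq_empty_iff_forall_notMem]
      intro j hj
      simp only [Finset.mem_filter, Finset.mem_singleton] at hj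
      exact hj.2.1 hj.1
    have h2 : 0 < enemiesIn G k C' := by
      refine Finset.card_pos.2 ⟨j, ?_⟩
      simp only [enemiesIn, Finset.mem_filter]
      exact ⟨hj, fun hji => hij hji.symm, fun ha => hadj ha⟩
    omega
  constructor
  · -- upper bound
    intro D hD
    by_contra hlt
    push_neg at hlt
    apply hc D
    have hDne : D.Nonempty := Finset.card_pos.1 (by omega)
    refine ⟨hDne, ?_⟩
    intro i hi C hCp hiC
    right
    have heD : enemiesIn G i D = 0 := by
      rw [enemiesIn, Finset.card_eq_zero, Finset.eq_empty_iff_forall_notMem]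
      intro j hj
      simp only [Finset.mem_filter] at hj
      exact hj.2.2 ((hD hj.1 hi hj.2.1).symm)
    have heC : enemiesIn G i C = 0 := by
      rw [enemiesIn, Finset.card_eq_zero, Finset.eq_empty_iff_forall_notMem]
      intro j hj
      simp only [Finset.mem_filter] at hj
      exact hj.2.2 ((hclique C hCp hj.1 hiC hj.2.1).symm)
    refine ⟨by omega, ?_⟩
    have hfD : friendsIn G i D = D.card - 1 := by
      rw [friendsIn]
      have : D.filter (fun j => G.Adj i j) = D.erase i := by
        ext j
        simp only [Finset.mem_filter, Finset.mem_erase]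
        constructor
        · exact fun ⟨h1, h2⟩ => ⟨(G.ne_of_adj h2).symm, h1⟩
        · exact fun ⟨h1, h2⟩ => ⟨h2, hD hi h2 (Ne.symm h1)⟩
      rw [this, Finset.card_erase_of_mem hi]
    have hfC : friendsIn G i C ≤ C.card - 1 := by
      have : C.filter (fun j => G.Adj i j) ⊆ C.erase i := by
        intro j hj
        simp only [Finset.mem_filter] at hj
        exact Finset.mem_erase.2 ⟨(G.ne_of_adj hj.2).symm, hj.1⟩
      calc friendsIn G i C ≤ (C.erase i).card := Finset.card_le_card this
        _ = C.card - 1 := Finset.card_erase_of_mem hiC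
    have hCle : C.card ≤ P.parts.sup Finset.card := Finset.le_sup hCp
    have hC1 : 1 ≤ C.card := Finset.card_pos.2 ⟨i, hiC⟩
    omega
  · -- attained
    have hne : P.parts.Nonempty := P.parts_nonempty (by
      simpa using (Finset.univ_nonempty (α := A)).ne_empty)
    obtain ⟨C, hC, hsup⟩ := Finset.exists_mem_eq_sup P.parts hne Finset.card
    exact ⟨C, hclique C hC, hsup.symm⟩
end

section
/- If an enemy-oriented hedonic game without neutrals admits a core stable partition with at most 2 coalitions, then the enemy graph G^e (the complement of the friendship graph G^f) is bipartite. -/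
open scoped Classical

variable {A : Type*}

variable [Fintype A] [DecidableEq A]

/-- If there is a core stable partition with at most two coalitions, then
the enemy graph (the complement of the friendship graph) is bipartite. -/
theorem stmt_10 [Nonempty A] (G : SimpleGraph A)
    (h : ∃ P : Finpartition (Finset.univ : Finset A),
        CoreStable G P ∧ P.parts.card ≤ 2) :
    Gᶜ.Colorable 2 := by
  obtain ⟨P, hcs, hcard⟩ := h
  -- Each part is a clique in G
  have hclique : ∀ C ∈ P.parts, ∀ i ∈ C, ∀ j ∈ C, j ≠ i → G.Adj i j := by
    intro C hC i hi j hj hne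
    by_contra hadj
    apply hcs {i}
    refine ⟨⟨i, Finset.mem_singleton_self i⟩, ?_⟩
    intro k hk C' hC' hkC'
    rw [Finset.mem_singleton] at hk
    subst hk
    have hCC' : C' = C := P.eq_of_mem_parts hC' hC hkC' hi
    subst hCC'
    left
    have h0 : enemiesIn G k {k} = 0 := by
      simp [enemiesIn, Finset.filter_singleton]
    rw [h0, enemiesIn]
    exact Finset.card_pos.mpr ⟨j, by simp [Finset.mem_filter, hj, hne, hadj]⟩
  -- pick a part containing some agent
  obtain ⟨a⟩ := ‹Nonempty A›
  obtain ⟨D, hD, _⟩ := P.exists_mem (Finset.mem_univ a)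
  refine ⟨fun i => if i ∈ D then 0 else 1, ?_⟩
  intro i j hij
  simp only [SimpleGraph.compl_adj] at hij
  obtain ⟨hne, hnadj⟩ := hij
  by_contra hcol
  by_cases hiD : i ∈ D
  · by_cases hjD : j ∈ D
    · exact hnadj (hclique D hD i hiD j hjD (Ne.symm hne))
    · simp [hiD, hjD] at hcol
  · by_cases hjD : j ∈ D
    · simp [hiD, hjD] at hcol
    · -- both outside D: their parts are equal since parts \ {D} has card ≤ 1
      obtain ⟨Ci, hCi, hiCi⟩ := P.exists_mem (Finset.mem_univ i)
      obtain ⟨Cj, hCj, hjCj⟩ := P.exists_mem (Finset.mem_univ j)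
      have hCiD : Ci ≠ D := fun hh => hiD (hh ▸ hiCi)
      have hCjD : Cj ≠ D := fun hh => hjD (hh ▸ hjCj)
      have : Ci = Cj := by
        by_contra hCC
        have hsub : {Ci, Cj, D} ⊆ P.parts := by
          intro X hX
          simp only [Finset.mem_insert, Finset.mem_singleton] at hX
          rcases hX with rfl | rfl | rfl <;> assumption
        have h3 : ({Ci, Cj, D} : Finset (Finset A)).card = 3 := by
          rw [Finset.card_insert_of_notMem, Finset.card_insert_of_notMem,
            Finset.card_singleton]
          · simpa using hCjD
          · simp only [Finset.mem_insert, Finset.mem_singleton]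
            push_neg
            exact ⟨hCC, hCiD⟩
        have := Finset.card_le_card hsub
        omega
      exact hnadj (hclique Ci hCi i hiCi j (this ▸ hjCj) (Ne.symm hne))
end

section
/- Let G = (V, E) be a finite simple graph, and construct the enemy-oriented hedonic game without neutrals whose agent set is A = V ∪ {d_v, d'_v : v ∈ V} (two fresh dummy agents per vertex) and whose enemy graph consists of the edges of E together with, for each v ∈ V, the three edges {v, d_v}, {v, d'_v}, and {d_v, d'_v} (the friendship graph is the complement). Then this game admits a core stable partition with at most 3 coalitions if and only if G admits a proper 3-coloring; moreover, the game admits a strictly core stable partition with at most 3 coalitions if and only if G admits a proper 3-coloring. -/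
open scoped Classical

variable {A : Type*}

variable [Fintype A] [DecidableEq A]

/-- The enemy graph of the reduction from 3-coloring: the agent set consists of the
vertices of `G` (`Sum.inl v`) together with two dummies `d_v = Sum.inr (Sum.inl v)` and
`d'_v = Sum.inr (Sum.inr v)` per vertex; enemies are the edges of `G` together with the
three edges `{v, d_v}`, `{v, d'_v}` and `{d_v, d'_v}` for each vertex `v`. -/
def reductionEnemyGraph {V : Type*} (G : SimpleGraph V) : SimpleGraph (V ⊕ (V ⊕ V)) :=
  SimpleGraph.fromRel fun a b =>
    match a, b with
    | Sum.inl u, Sum.inl v => G.Adj u v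
    | Sum.inl u, Sum.inr (Sum.inl v) => u = v
    | Sum.inl u, Sum.inr (Sum.inr v) => u = v
    | Sum.inr (Sum.inl u), Sum.inr (Sum.inr v) => u = v
    | _, _ => False

section MyAux

variable {X : Type*}

lemma my_friends_add_enemies (G : SimpleGraph X) {i : X} {S : Finset X} (hi : i ∈ S) :
    friendsIn G i S + enemiesIn G i S + 1 = S.card := by
  unfold friendsIn enemiesIn
  have hdisj : Disjoint (S.filter fun j => G.Adj i j)
      (S.filter fun j => j ≠ i ∧ ¬ G.Adj i j) := by
    rw [Finset.disjoint_left]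
    intro a ha hb
    rw [Finset.mem_filter] at ha hb
    exact hb.2.2 ha.2
  have key : (S.filter fun j => G.Adj i j) ∪ (S.filter fun j => j ≠ i ∧ ¬ G.Adj i j)
      = S.erase i := by
    ext j
    simp only [Finset.mem_union, Finset.mem_filter, Finset.mem_erase]
    constructor
    · rintro (⟨hj, h⟩ | ⟨hj, h, _⟩)
      · exact ⟨fun e => (G.ne_of_adj h) e.symm, hj⟩
      · exact ⟨h, hj⟩
    · rintro ⟨hne, hj⟩
      by_cases hadj : G.Adj i j
      · exact Or.inl ⟨hj, hadj⟩
      · exact Or.inr ⟨hj, hne, hadj⟩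
  rw [← Finset.card_union_of_disjoint hdisj, key, Finset.card_erase_of_mem hi]
  have := Finset.card_pos.mpr ⟨i, hi⟩
  omega

lemma my_enemiesIn_compl_eq_zero (H : SimpleGraph X) (i : X) (S : Finset X) :
    enemiesIn Hᶜ i S = 0 ↔ ∀ j ∈ S, ¬ H.Adj i j := by
  unfold enemiesIn
  rw [Finset.card_eq_zero, Finset.eq_empty_iff_forall_notMem]
  constructor
  · intro h j hj hadj
    apply h j
    simp only [Finset.mem_filter]
    refine ⟨hj, fun e => (H.ne_of_adj hadj) e.symm, ?_⟩
    rw [SimpleGraph.compl_adj]; push_neg; intro _; exact hadj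
  · intro h j hjf
    simp only [Finset.mem_filter] at hjf
    obtain ⟨hj, hne, hnadj⟩ := hjf
    rw [SimpleGraph.compl_adj] at hnadj
    push_neg at hnadj
    exact h j hj (hnadj (fun e => hne e.symm))

lemma my_prefers_asymm (G : SimpleGraph X) (i : X) (S1 S2 : Finset X) :
    Prefers G i S1 S2 → ¬ Prefers G i S2 S1 := by
  unfold Prefers
  omega

lemma my_strict_to_core [Fintype X] [DecidableEq X] (G : SimpleGraph X)
    (P : Finpartition (Finset.univ : Finset X)) (h : StrictlyCoreStable G P) :
    CoreStable G P := by
  intro B hB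
  obtain ⟨hne, hall⟩ := hB
  obtain ⟨i, hi⟩ := hne
  exact h B ⟨⟨i, hi⟩,
    fun j hj C hC hjC => my_prefers_asymm G j B C (hall j hj C hC hjC),
    ⟨i, hi, fun C hC hiC => hall i hi C hC hiC⟩⟩

lemma my_coreStable_zero_enemies [Fintype X] [DecidableEq X] (G : SimpleGraph X)
    (P : Finpartition (Finset.univ : Finset X)) (h : CoreStable G P) {i : X} {C : Finset X}
    (hC : C ∈ P.parts) (hiC : i ∈ C) : enemiesIn G i C = 0 := by
  by_contra hne
  refine h {i} ⟨⟨i, Finset.mem_singleton_self i⟩, ?_⟩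
  intro j hj D hD hjD
  rw [Finset.mem_singleton] at hj
  subst hj
  have hDC : D = C := P.eq_of_mem_parts hD hC hjD hiC
  subst hDC
  have hsing : enemiesIn G j {j} = 0 := by
    unfold enemiesIn
    rw [Finset.card_eq_zero, Finset.eq_empty_iff_forall_notMem]
    intro x hx
    simp only [Finset.mem_filter, Finset.mem_singleton] at hx
    exact hx.2.1 hx.1
  exact Or.inl (by omega)

end MyAux

/-- For a finite simple graph `G`, the enemy-oriented hedonic game without
neutrals whose enemy graph is `reductionEnemyGraph G` (its friendship graph being the
complement) admits a core stable partition with at most 3 coalitions iff `G` has a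
proper 3-coloring; likewise it admits a strictly core stable partition with at most 3
coalitions iff `G` has a proper 3-coloring. -/
theorem stmt_16 {V : Type*} [Fintype V] [DecidableEq V] (G : SimpleGraph V) :
    ((∃ P : Finpartition (Finset.univ : Finset (V ⊕ (V ⊕ V))),
        CoreStable (reductionEnemyGraph G)ᶜ P ∧ P.parts.card ≤ 3) ↔ G.Colorable 3) ∧
    ((∃ P : Finpartition (Finset.univ : Finset (V ⊕ (V ⊕ V))),
        StrictlyCoreStable (reductionEnemyGraph G)ᶜ P ∧ P.parts.card ≤ 3) ↔
      G.Colorable 3) := by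
  set H := reductionEnemyGraph G with hH
  -- adjacency facts for H
  have hadj_ll : ∀ u v : V, G.Adj u v → H.Adj (Sum.inl u) (Sum.inl v) := by
    intro u v h
    rw [hH]
    unfold reductionEnemyGraph
    rw [SimpleGraph.fromRel_adj]
    exact ⟨by simp [h.ne], Or.inl h⟩
  -- forward direction
  have fwd : (∃ P : Finpartition (Finset.univ : Finset (V ⊕ (V ⊕ V))),
      CoreStable Hᶜ P ∧ P.parts.card ≤ 3) → G.Colorable 3 := by
    rintro ⟨P, hP, hcard⟩
    have hzero : ∀ i : V ⊕ (V ⊕ V), ∀ j ∈ P.part i, ¬ H.Adj i j := by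
      intro i
      have h0 := my_coreStable_zero_enemies Hᶜ P hP
        (P.part_mem.2 (Finset.mem_univ i)) (P.mem_part (Finset.mem_univ i))
      exact (my_enemiesIn_compl_eq_zero H i _).mp h0
    let col : V → {C // C ∈ P.parts} :=
      fun v => ⟨P.part (Sum.inl v), P.part_mem.2 (Finset.mem_univ _)⟩
    have hvalid : ∀ {u v : V}, G.Adj u v → col u ≠ col v := by
      intro u v huv heq
      have h2 : (Sum.inl v : V ⊕ (V ⊕ V)) ∈ P.part (Sum.inl u) := by
        have h3 : P.part (Sum.inl v) = P.part (Sum.inl u) := (congrArg Subtype.val heq).symm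
        rw [← h3]
        exact P.mem_part (Finset.mem_univ _)
      exact hzero _ _ h2 (hadj_ll u v huv)
    have hcol : G.Colorable (Fintype.card {C // C ∈ P.parts}) :=
      (SimpleGraph.Coloring.mk col hvalid).colorable
    refine hcol.mono ?_
    rwa [Fintype.card_coe]
  -- backward direction
  have bwd : G.Colorable 3 → ∃ P : Finpartition (Finset.univ : Finset (V ⊕ (V ⊕ V))),
      StrictlyCoreStable Hᶜ P ∧ P.parts.card ≤ 3 := by
    rintro ⟨c⟩
    have fin1 : ∀ x : Fin 3, x ≠ x + 1 := by decide
    have fin2 : ∀ x : Fin 3, x ≠ x + 2 := by decide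
    have fin3 : ∀ x : Fin 3, x + 1 ≠ x + 2 := by decide
    have fin4 : ∀ x k : Fin 3, x ≠ k → x + 1 ≠ k → x + 2 = k := by decide
    set f : V ⊕ (V ⊕ V) → Fin 3 :=
      Sum.elim (fun v => c v) (Sum.elim (fun v => c v + 1) (fun v => c v + 2)) with hf
    let s : Setoid (V ⊕ (V ⊕ V)) := Setoid.ker f
    let P : Finpartition (Finset.univ : Finset (V ⊕ (V ⊕ V))) := Finpartition.ofSetoid s
    have hmem : ∀ a b : V ⊕ (V ⊕ V), b ∈ P.part a ↔ f a = f b := by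
      intro a b
      exact Finpartition.mem_part_ofSetoid_iff_rel
    -- f respects the enemy graph
    have hresp : ∀ a b : V ⊕ (V ⊕ V), H.Adj a b → f a ≠ f b := by
      intro a b hadj
      rw [hH] at hadj
      unfold reductionEnemyGraph at hadj
      rw [SimpleGraph.fromRel_adj] at hadj
      obtain ⟨hne, hr⟩ := hadj
      rcases a with u | u | u <;> rcases b with v | v | v <;>
        simp only [hf, Sum.elim_inl, Sum.elim_inr] at hr ⊢ <;>
        rcases hr with h | h
      · exact c.valid h
      · exact (c.valid h).symm
      · subst h; exact fin1 _
      · exact h.elim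
      · subst h; exact fin2 _
      · exact h.elim
      · exact h.elim
      · subst h; exact (fin1 _).symm
      · exact h.elim
      · exact h.elim
      · subst h; exact fin3 _
      · exact h.elim
      · exact h.elim
      · subst h; exact (fin2 _).symm
      · exact h.elim
      · subst h; exact (fin3 _).symm
      · exact h.elim
      · exact h.elim
    -- triangle projection
    let proj : V ⊕ (V ⊕ V) → V := Sum.elim id (Sum.elim id id)
    have hproj : ∀ a b : V ⊕ (V ⊕ V), a ≠ b → proj a = proj b → H.Adj a b := by
      intro a b hne hpq
      rw [hH]
      unfold reductionEnemyGraph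
      rw [SimpleGraph.fromRel_adj]
      refine ⟨hne, ?_⟩
      rcases a with u | u | u <;> rcases b with v | v | v <;>
        simp only [proj, Sum.elim_inl, Sum.elim_inr, id] at hpq <;> subst hpq
      · exact absurd rfl hne
      · exact Or.inl rfl
      · exact Or.inl rfl
      · exact Or.inr rfl
      · exact absurd rfl hne
      · exact Or.inl rfl
      · exact Or.inr rfl
      · exact Or.inr rfl
      · exact absurd rfl hne
    -- each part has at least card V elements
    have hpartcard : ∀ a : V ⊕ (V ⊕ V), Fintype.card V ≤ (P.part a).card := by
      intro a
      set k := f a with hk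
      let g : V → V ⊕ (V ⊕ V) := fun v =>
        if c v = k then Sum.inl v
        else if c v + 1 = k then Sum.inr (Sum.inl v)
        else Sum.inr (Sum.inr v)
      have hfg : ∀ v : V, f (g v) = k := by
        intro v
        by_cases h1 : c v = k
        · simp [g, h1, hf]
        · by_cases h2 : c v + 1 = k
          · simp [g, h1, h2, hf]
          · have h3 := fin4 (c v) k h1 h2
            simp [g, h1, h2, hf, h3]
      have hmaps : ∀ v ∈ (Finset.univ : Finset V), g v ∈ P.part a := by
        intro v _
        rw [hmem]
        rw [hfg v]
      have hinj : Set.InjOn g (Finset.univ : Finset V) := by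
        intro u _ v _ h
        unfold g at h
        split_ifs at h <;> simp_all
      calc Fintype.card V = (Finset.univ : Finset V).card := (Finset.card_univ).symm
        _ ≤ (P.part a).card := Finset.card_le_card_of_injOn g hmaps hinj
    refine ⟨P, ?_, ?_⟩
    · -- strictly core stable
      intro B hB
      obtain ⟨hBne, hweak, i0, hi0, hstrict⟩ := hB
      have hzeroPart : ∀ i : V ⊕ (V ⊕ V), enemiesIn Hᶜ i (P.part i) = 0 := by
        intro i
        rw [my_enemiesIn_compl_eq_zero]
        intro j hj hadj
        exact hresp i j hadj ((hmem i j).mp hj)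
      have hkey : ∀ i ∈ B, enemiesIn Hᶜ i B = 0 ∧ (P.part i).card ≤ B.card := by
        intro i hi
        have hw := hweak i hi (P.part i) (P.part_mem.2 (Finset.mem_univ i))
          (P.mem_part (Finset.mem_univ i))
        unfold WeaklyPrefers Prefers at hw
        push_neg at hw
        rw [hzeroPart i] at hw
        obtain ⟨hw1, hw2⟩ := hw
        have heB : enemiesIn Hᶜ i B = 0 := by omega
        have hfB := hw2 heB.symm
        have hc1 := my_friends_add_enemies Hᶜ (P.mem_part (Finset.mem_univ i))
        have hc2 := my_friends_add_enemies Hᶜ hi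
        rw [hzeroPart i] at hc1
        rw [heB] at hc2
        exact ⟨heB, by omega⟩
      have hindep : ∀ i ∈ B, ∀ j ∈ B, ¬ H.Adj i j := by
        intro i hi
        exact (my_enemiesIn_compl_eq_zero H i B).mp (hkey i hi).1
      have hBle : B.card ≤ Fintype.card V := by
        have h1 : ∀ a ∈ B, proj a ∈ (Finset.univ : Finset V) := fun a _ => Finset.mem_univ _
        have h2 : Set.InjOn proj (B : Set (V ⊕ (V ⊕ V))) := by
          intro a ha b hb hpq
          by_contra hne
          exact hindep a ha b hb (hproj a b hne hpq)
        calc B.card ≤ (Finset.univ : Finset V).card := Finset.card_le_card_of_injOn proj h1 h2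
          _ = Fintype.card V := Finset.card_univ
      -- strict preference for i0 is impossible
      have hs := hstrict (P.part i0) (P.part_mem.2 (Finset.mem_univ i0))
        (P.mem_part (Finset.mem_univ i0))
      unfold Prefers at hs
      rw [hzeroPart i0, (hkey i0 hi0).1] at hs
      have hc1 := my_friends_add_enemies Hᶜ (P.mem_part (Finset.mem_univ i0))
      have hc2 := my_friends_add_enemies Hᶜ hi0
      rw [hzeroPart i0] at hc1
      rw [(hkey i0 hi0).1] at hc2
      have h3 := (hkey i0 hi0).2
      have h4 := hpartcard i0
      omega
    · -- at most 3 parts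
      let F : Finset (V ⊕ (V ⊕ V)) → Fin 3 := fun C =>
        if h : C.Nonempty then f h.choose else 0
      have hFmem : ∀ C ∈ P.parts, ∃ x ∈ C, F C = f x := by
        intro C hC
        have hne : C.Nonempty := P.nonempty_of_mem_parts hC
        exact ⟨hne.choose, hne.choose_spec, by simp [F, hne]⟩
      have hinj : Set.InjOn F (P.parts : Set (Finset (V ⊕ (V ⊕ V)))) := by
        intro C1 hC1 C2 hC2 hF
        obtain ⟨x1, hx1, he1⟩ := hFmem C1 hC1
        obtain ⟨x2, hx2, he2⟩ := hFmem C2 hC2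
        have hfx : f x1 = f x2 := by rw [← he1, ← he2, hF]
        have hp1 : P.part x1 = C1 := P.part_eq_of_mem hC1 hx1
        have hp2 : P.part x2 = C2 := P.part_eq_of_mem hC2 hx2
        have : P.part x1 = P.part x2 := by
          ext b
          rw [hmem, hmem, hfx]
        rw [← hp1, ← hp2, this]
      calc P.parts.card ≤ (Finset.univ : Finset (Fin 3)).card :=
            Finset.card_le_card_of_injOn F (fun a _ => Finset.mem_univ _) hinj
        _ = 3 := by simp
  constructor
  · constructor
    · exact fwd
    · intro h
      obtain ⟨P, h1, h2⟩ := bwd h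
      exact ⟨P, my_strict_to_core Hᶜ P h1, h2⟩
  · constructor
    · rintro ⟨P, h1, h2⟩
      exact fwd ⟨P, my_strict_to_core Hᶜ P h1, h2⟩
    · exact bwd
end
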